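/- Let X be a finite set, T a stochastic matrix on X, L the associated generator, Γ the carré du champ operator, and P_t = exp(tL) the semigroup (matrix exponential). Assume the non-negative curvature condition: for all t ≥ 0 and all g : X → ℝ, (Γ(P_t g))(x) ≤ (P_t(Γ g))(x) for every x ∈ X. Then the local Poincaré inequality holds: for all t ≥ 0, all g : X → ℝ and all x ∈ X, (P_t(g²))(x) - ((P_t g)(x))² ≤ 2t·(P_t(Γ g))(x). -/

import Mathlib

variable {X : Type*}

/-- `T` is a stochastic matrix: nonnegative entries and unit row sums. -/
def IsStochastic [Fintype X] (T : X → X → ℝ) : Prop :=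
  (∀ x y, 0 ≤ T x y) ∧ ∀ x, ∑ y, T x y = 1

/-- The generator: `(L f)(x) = ∑_y T(x,y) (f(y) - f(x))`. -/
noncomputable def gen [Fintype X] (T : X → X → ℝ) (f : X → ℝ) : X → ℝ :=
  fun x => ∑ y, T x y * (f y - f x)

/-- The carré du champ operator: `(Γ f)(x) = (1/2) ∑_y T(x,y) (f(y) - f(x))²`. -/
noncomputable def carre [Fintype X] (T : X → X → ℝ) (f : X → ℝ) : X → ℝ :=
  fun x => (1 / 2) * ∑ y, T x y * (f y - f x) ^ 2

/-- The generator as a matrix: `L = T - Id`. -/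
noncomputable def genMat [Fintype X] [DecidableEq X] (T : X → X → ℝ) : Matrix X X ℝ :=
  fun x y => T x y - if x = y then 1 else 0

/-- The heat semigroup `P_t = exp (t L)` (matrix exponential). -/
noncomputable def heatSG [Fintype X] [DecidableEq X] (T : X → X → ℝ) (t : ℝ) : Matrix X X ℝ :=
  NormedSpace.exp (t • genMat T)

/-- Evolution of a measure (row vector) `μ_t = μ · exp (t L)`. -/
noncomputable def evolve [Fintype X] [DecidableEq X] (T : X → X → ℝ) (μ : X → ℝ) (t : ℝ) :
    X → ℝ :=
  Matrix.vecMul μ (heatSG T t)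

/-!
Interpolate `Φ(s) = P_s ((P_{t-s} g)²)(x)` between `Φ 0 = (P_t g x)²` and `Φ t = P_t (g²) x`.
Since `L (f²) - 2 f L f = 2 Γ f`, we get `Φ'(s) = 2 P_s Γ(P_{t-s} g)(x)`, which by the curvature
condition and positivity of `P_s` is at most `2 P_s P_{t-s} Γ g (x) = 2 P_t Γ g (x)`; the mean
value inequality on `[0, t]` concludes.
-/

open NormedSpace Matrix

-- Any submultiplicative norm would do: it is only needed to differentiate `u ↦ exp (u • M)`.
attribute [local instance] Matrix.linftyOpNormedAddCommGroup Matrix.linftyOpNormedRing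
  Matrix.linftyOpNormedAlgebra

section MatrixExp

variable {ι : Type*} [Fintype ι]

theorem Matrix.hasDerivAt_mulVec_apply {A : ℝ → Matrix ι ι ℝ} {A' : Matrix ι ι ℝ}
    {w : ℝ → ι → ℝ} {w' : ι → ℝ} {s : ℝ} {i : ι}
    (hA : ∀ j, HasDerivAt (fun u => A u i j) (A' i j) s)
    (hw : ∀ j, HasDerivAt (fun u => w u j) (w' j) s) :
    HasDerivAt (fun u => (A u *ᵥ w u) i) ((A' *ᵥ w s) i + (A s *ᵥ w') i) s := by
  simp only [mulVec, dotProduct, ← Finset.sum_add_distrib]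
  exact HasDerivAt.fun_sum fun j _ => (hA j).mul (hw j)

theorem Matrix.mulVec_apply_le_mulVec_apply {A : Matrix ι ι ℝ} {f g : ι → ℝ} {i : ι}
    (hA : ∀ j, 0 ≤ A i j) (hfg : ∀ j, f j ≤ g j) : (A *ᵥ f) i ≤ (A *ᵥ g) i :=
  Finset.sum_le_sum fun j _ => mul_le_mul_of_nonneg_left (hfg j) (hA j)

variable [DecidableEq ι]

theorem Matrix.exp_apply_nonneg {M : Matrix ι ι ℝ} (hM : ∀ i j, 0 ≤ M i j) (i j : ι) :
    0 ≤ exp M i j := by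
  have hentry : exp M i j = ∑' n : ℕ, (n.factorial : ℝ)⁻¹ • (M ^ n) i j := by
    rw [exp_eq_tsum ℝ]
    exact (entryLinearMap ℝ ℝ i j).toContinuousLinearMap.map_tsum (expSeries_summable' M)
  rw [hentry]
  exact tsum_nonneg fun n => smul_nonneg (by positivity) (pow_apply_nonneg hM n i j)

theorem Matrix.exp_smul_one (r : ℝ) : exp (r • (1 : Matrix ι ι ℝ)) = Real.exp r • 1 := by
  rw [← Algebra.algebraMap_eq_smul_one, ← Algebra.algebraMap_eq_smul_one, Real.exp_eq_exp_ℝ]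
  exact (algebraMap_exp_comm (𝔸 := Matrix ι ι ℝ) r).symm

theorem Matrix.hasDerivAt_exp_smul_apply (M : Matrix ι ι ℝ) (s : ℝ) (i j : ι) :
    HasDerivAt (fun u : ℝ => exp (u • M) i j) ((exp (s • M) * M) i j) s :=
  (entryLinearMap ℝ ℝ i j).toContinuousLinearMap.hasFDerivAt.comp_hasDerivAt s
    (hasDerivAt_exp_smul_const M s)

end MatrixExp

section HeatSemigroup

variable [Fintype X] {T : X → X → ℝ}

theorem gen_sq_sub_two_mul_gen (f : X → ℝ) (x : X) :
    gen T (fun y => f y ^ 2) x - 2 * f x * gen T f x = 2 * carre T f x := by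
  simp only [gen, carre, Finset.mul_sum, ← Finset.sum_sub_distrib]
  exact Finset.sum_congr rfl fun y _ => by ring

variable [DecidableEq X]

theorem genMat_mulVec (hT : ∀ x, ∑ y, T x y = 1) (f : X → ℝ) : genMat T *ᵥ f = gen T f := by
  ext x
  simp only [genMat, mulVec, dotProduct, gen, sub_mul, ite_mul, one_mul, zero_mul,
    Finset.sum_sub_distrib, Finset.sum_ite_eq, Finset.mem_univ, if_true, mul_sub,
    ← Finset.sum_mul, hT x]

variable (T) in
theorem heatSG_zero : heatSG T 0 = 1 := by
  rw [heatSG, zero_smul, exp_zero]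

variable (T) in
theorem heatSG_add (s u : ℝ) : heatSG T (s + u) = heatSG T s * heatSG T u := by
  unfold heatSG
  rw [add_smul, Matrix.exp_add_of_commute]
  exact ((Commute.refl (genMat T)).smul_left s).smul_right u

variable (T) in
theorem heatSG_commute_genMat (s : ℝ) : Commute (heatSG T s) (genMat T) :=
  ((Commute.refl (genMat T)).smul_left s).exp_left

theorem heatSG_eq_smul_exp (s : ℝ) :
    heatSG T s = Real.exp (-s) • exp (s • Matrix.of T) := by
  have hsplit : s • genMat T = (-s) • (1 : Matrix X X ℝ) + s • Matrix.of T := by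
    ext x y
    simp only [genMat, Matrix.smul_apply, Matrix.add_apply, one_apply, of_apply, smul_eq_mul]
    ring
  have hcomm : Commute ((-s) • (1 : Matrix X X ℝ)) (s • Matrix.of T) :=
    ((Commute.one_left _).smul_left _).smul_right _
  rw [heatSG, hsplit, Matrix.exp_add_of_commute _ _ hcomm, exp_smul_one, smul_one_mul]

theorem heatSG_apply_nonneg (hT : ∀ x y, 0 ≤ T x y) {s : ℝ} (hs : 0 ≤ s) (x y : X) :
    0 ≤ heatSG T s x y := by
  rw [heatSG_eq_smul_exp, Matrix.smul_apply, smul_eq_mul]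
  exact mul_nonneg (Real.exp_pos _).le
    (exp_apply_nonneg (fun a b => mul_nonneg hs (hT a b)) x y)

theorem hasDerivAt_heatSG_mulVec_apply (f : X → ℝ) (s : ℝ) (x : X) :
    HasDerivAt (fun u => (heatSG T u *ᵥ f) x) ((heatSG T s *ᵥ (genMat T *ᵥ f)) x) s := by
  have := hasDerivAt_mulVec_apply (w := fun _ => f) (w' := 0)
    (hasDerivAt_exp_smul_apply (genMat T) s x) (fun y => hasDerivAt_const s (f y))
  simpa [heatSG, mulVec_mulVec] using this

theorem hasDerivAt_heatSG_interpolation (hT : ∀ x, ∑ y, T x y = 1) (t : ℝ) (g : X → ℝ)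
    (x : X) (s : ℝ) :
    HasDerivAt (fun u => (heatSG T u *ᵥ fun y => (heatSG T (t - u) *ᵥ g) y ^ 2) x)
      (2 * (heatSG T s *ᵥ carre T (heatSG T (t - s) *ᵥ g)) x) s := by
  set v : ℝ → X → ℝ := fun u => heatSG T (t - u) *ᵥ g
  have hv : ∀ y, HasDerivAt (fun u => v u y) (-gen T (v s) y) s := by
    intro y
    refine ((hasDerivAt_heatSG_mulVec_apply g (t - s) y).comp s
      ((hasDerivAt_id s).const_sub t)).congr_deriv ?_
    rw [← genMat_mulVec hT, mulVec_mulVec, (heatSG_commute_genMat T (t - s)).eq,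
      ← mulVec_mulVec, mul_neg_one]
  have hv_sq : ∀ y, HasDerivAt (fun u => v u y ^ 2) (2 * v s y * -gen T (v s) y) s :=
    fun y => ((hv y).fun_pow 2).congr_deriv (by ring)
  have hP : ∀ y, HasDerivAt (fun u => heatSG T u x y) ((heatSG T s * genMat T) x y) s :=
    hasDerivAt_exp_smul_apply (genMat T) s x
  refine (hasDerivAt_mulVec_apply hP hv_sq).congr_deriv ?_
  have hΓ : gen T (fun y => v s y ^ 2) + (fun y => 2 * v s y * -gen T (v s) y)
      = (2 : ℝ) • carre T (v s) := by
    ext y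
    simp only [Pi.add_apply, Pi.smul_apply, smul_eq_mul]
    linarith [gen_sq_sub_two_mul_gen (T := T) (v s) y]
  rw [← mulVec_mulVec, genMat_mulVec hT, ← Pi.add_apply, ← mulVec_add, hΓ, mulVec_smul]
  rfl

end HeatSemigroup

/-- Local Poincaré inequality: non-negative curvature
`Γ P_t g ≤ P_t Γ g` implies `P_t(g²) - (P_t g)² ≤ 2t P_t(Γ g)` pointwise. -/
theorem local_poincare [Fintype X] [DecidableEq X] (T : X → X → ℝ) (hT : IsStochastic T)
    (hcurv : ∀ t : ℝ, 0 ≤ t → ∀ g : X → ℝ, ∀ x : X,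
      carre T ((heatSG T t).mulVec g) x ≤ (heatSG T t).mulVec (carre T g) x) :
    ∀ t : ℝ, 0 ≤ t → ∀ g : X → ℝ, ∀ x : X,
      (heatSG T t).mulVec (fun z => g z ^ 2) x - ((heatSG T t).mulVec g x) ^ 2 ≤
        2 * t * (heatSG T t).mulVec (carre T g) x := by
  intro t ht g x
  set Φ : ℝ → ℝ := fun u => (heatSG T u *ᵥ fun y => (heatSG T (t - u) *ᵥ g) y ^ 2) x
  have hΦ := hasDerivAt_heatSG_interpolation hT.2 t g x
  have hΦ_le : ∀ s ∈ interior (Set.Icc 0 t), deriv Φ s ≤ 2 * (heatSG T t *ᵥ carre T g) x := by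
    intro s hs
    rw [interior_Icc] at hs
    rw [(hΦ s).deriv]
    calc 2 * (heatSG T s *ᵥ carre T (heatSG T (t - s) *ᵥ g)) x
        ≤ 2 * (heatSG T s *ᵥ (heatSG T (t - s) *ᵥ carre T g)) x := by
          gcongr
          exact mulVec_apply_le_mulVec_apply (heatSG_apply_nonneg hT.1 hs.1.le x)
            (hcurv (t - s) (by linarith [hs.2]) g)
      _ = 2 * (heatSG T t *ᵥ carre T g) x := by
          rw [mulVec_mulVec, ← heatSG_add, add_sub_cancel]
  have hΦ_mvt := (convex_Icc 0 t).image_sub_le_mul_sub_of_deriv_le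
    (fun s _ => (hΦ s).continuousAt.continuousWithinAt)
    (fun s _ => (hΦ s).differentiableAt.differentiableWithinAt) hΦ_le
    0 (Set.left_mem_Icc.2 ht) t (Set.right_mem_Icc.2 ht) ht
  simp only [sub_zero, sub_self, heatSG_zero, one_mulVec] at hΦ_mvt
  linarith
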